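/- arXiv:0807.1664 — 7 statements merged into one kernel-verified Lean document; each statement's English description precedes it below -/
import Mathlib

section
/- Let (g,J) be an almost complex Lie algebra such that J[X,Y] = -[JX,Y] = -[X,JY] for all X,Y in g. Then g is 2-step nilpotent, i.e. [[X,Y],Z] = 0 for all X,Y,Z in g. -/
/-- A quasi-Kähler Chern-flat Lie algebra, i.e. a real Lie algebra with an
almost complex structure `J` satisfying `J[X,Y] = -[JX,Y] = -[X,JY]`,
is 2-step nilpotent. -/
theorem qkcf_two_step_nilpotent (g : Type*) [LieRing g] [LieAlgebra ℝ g]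
    [FiniteDimensional ℝ g]
    (J : g →ₗ[ℝ] g) (hJ : ∀ X : g, J (J X) = -X)
    (h1 : ∀ X Y : g, J ⁅X, Y⁆ = -⁅J X, Y⁆)
    (h2 : ∀ X Y : g, J ⁅X, Y⁆ = -⁅X, J Y⁆) :
    ∀ X Y Z : g, ⁅⁅X, Y⁆, Z⁆ = 0 := by
  -- [JX, Y] = [X, JY]
  have key : ∀ X Y : g, ⁅J X, Y⁆ = ⁅X, J Y⁆ := fun X Y =>
    neg_injective ((h1 X Y).symm.trans (h2 X Y))
  -- [JX, JY] = -[X, Y]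
  have hneg : ∀ X Y : g, ⁅J X, J Y⁆ = -⁅X, Y⁆ := fun X Y => by
    rw [← key, hJ, neg_lie]
  -- J[JX, Y] = [X, Y]
  have hJb : ∀ X Y : g, J ⁅J X, Y⁆ = ⁅X, Y⁆ := fun X Y => by
    rw [h1, hJ, neg_lie, neg_neg]
  -- Jacobi identity
  have jac : ∀ X Y Z : g, ⁅⁅X, Y⁆, Z⁆ + ⁅⁅Y, Z⁆, X⁆ + ⁅⁅Z, X⁆, Y⁆ = 0 := by
    intro X Y Z
    have h := lie_jacobi X Y Z
    rw [← lie_skew X ⁅Y, Z⁆, ← lie_skew Y ⁅Z, X⁆, ← lie_skew Z ⁅X, Y⁆] at h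
    linear_combination (norm := abel) -h
  intro X Y Z
  -- twisted Jacobi: -[[X,Y],Z] + [[Y,Z],X] + [[Z,X],Y] = 0
  have tjac : -⁅⁅X, Y⁆, Z⁆ + ⁅⁅Y, Z⁆, X⁆ + ⁅⁅Z, X⁆, Y⁆ = 0 := by
    have := jac (J X) (J Y) Z
    rw [hneg X Y, neg_lie] at this
    have e2 : ⁅⁅J Y, Z⁆, J X⁆ = ⁅⁅Y, Z⁆, X⁆ := by
      rw [← key, hJb]
    have e3 : ⁅⁅Z, J X⁆, J Y⁆ = ⁅⁅Z, X⁆, Y⁆ := by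
      rw [← key, ← key Z X, hJb]
    rw [e2, e3] at this
    exact this
  have h2a : (2 : ℝ) • ⁅⁅X, Y⁆, Z⁆ = 0 := by
    have := jac X Y Z
    rw [two_smul]
    linear_combination (norm := abel) this - tjac
  simpa using (smul_eq_zero.mp h2a).resolve_left (by norm_num)
end

section
/- Let h be a 2-step nilpotent real Lie algebra. Define on h⊗C the bracket [X⊗a, Y⊗b] := (conj(a·b))·[X,Y] (conjugate-bilinear in the scalars) and the complex structure J(X⊗a) := X⊗(ia). Then (h⊗C, J) is a real Lie algebra satisfying J[u,v] = -[Ju,v] = -[u,Jv] for all u,v, i.e. it is quasi-Kähler Chern-flat. -/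
/-! An element `(u₁, u₂)` of `L × L` stands for `u₁ ⊗ 1 + u₂ ⊗ i ∈ L ⊗ ℂ`.
An iterated twisted bracket is a combination of double brackets of `L`, which vanish when
`L` is 2-step nilpotent, so each term of the Jacobi sum is already zero. The identities
for `J` need only biadditivity: the twisted bracket conjugates scalars, so a factor `i`
in either slot comes out as `-i`. -/

namespace ConjComplexification

variable {L : Type*} [LieRing L]

def bracket (u v : L × L) : L × L :=
  (⁅u.1, v.1⁆ - ⁅u.2, v.2⁆, -⁅u.1, v.2⁆ - ⁅u.2, v.1⁆)

def complexStructure (u : L × L) : L × L :=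
  (-u.2, u.1)

theorem bracket_bracket_eq_zero (hnil : ∀ X Y Z : L, ⁅⁅X, Y⁆, Z⁆ = 0) (u v w : L × L) :
    bracket (bracket u v) w = 0 := by
  simp only [bracket, sub_lie, neg_lie, hnil, sub_zero, neg_zero, Prod.mk_eq_zero, and_self]

theorem bracket_complexStructure_left (u v : L × L) :
    bracket (complexStructure u) v = -complexStructure (bracket u v) := by
  simp only [bracket, complexStructure, neg_lie, Prod.neg_mk, Prod.mk.injEq]
  constructor <;> abel

theorem bracket_complexStructure_right (u v : L × L) :
    bracket u (complexStructure v) = -complexStructure (bracket u v) := by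
  simp only [bracket, complexStructure, lie_neg, Prod.neg_mk, Prod.mk.injEq]
  constructor <;> abel

end ConjComplexification

open ConjComplexification in
theorem qkcf_conjugate_complexification_general (h : Type*) [LieRing h]
    (hnil : ∀ X Y Z : h, ⁅⁅X, Y⁆, Z⁆ = 0)
    (qb : h × h → h × h → h × h)
    (hqb : ∀ u v : h × h,
      qb u v = (⁅u.1, v.1⁆ - ⁅u.2, v.2⁆, -⁅u.1, v.2⁆ - ⁅u.2, v.1⁆))
    (J : h × h → h × h) (hJ : ∀ u : h × h, J u = (-u.2, u.1)) :
    (∀ u v w : h × h, qb (qb u v) w + qb (qb v w) u + qb (qb w u) v = 0) ∧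
    (∀ u v : h × h, J (qb u v) = -qb (J u) v) ∧
    (∀ u v : h × h, J (qb u v) = -qb u (J v)) := by
  obtain rfl : qb = bracket := funext₂ hqb
  obtain rfl : J = complexStructure := funext hJ
  refine ⟨fun u v w => ?_, fun u v => ?_, fun u v => ?_⟩
  · simp only [bracket_bracket_eq_zero hnil, add_zero]
  · rw [bracket_complexStructure_left, neg_neg]
  · rw [bracket_complexStructure_right, neg_neg]

/-- Given a 2-step nilpotent real Lie algebra `h`, its complexification
`h ⊗ ℂ` (modelled as `h × h`, with `(u₁, u₂)` standing for `u₁ ⊗ 1 + u₂ ⊗ i`)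
carries the conjugate-twisted bracket `[X⊗a, Y⊗b] = [X,Y] ⊗ conj(ab)`, given in
these coordinates by
`qb (u₁,u₂) (v₁,v₂) = ([u₁,v₁] - [u₂,v₂], -[u₁,v₂] - [u₂,v₁])`,
and the complex structure `J(X⊗a) = X ⊗ (ia)`, i.e. `J (u₁,u₂) = (-u₂, u₁)`.
Then `qb` satisfies the Jacobi identity (so `h ⊗ ℂ` is a Lie algebra) and
`J[u,v] = -[Ju,v] = -[u,Jv]`, i.e. it is quasi-Kähler Chern-flat. -/
theorem qkcf_conjugate_complexification (h : Type*) [LieRing h] [LieAlgebra ℝ h]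
    [FiniteDimensional ℝ h]
    (hnil : ∀ X Y Z : h, ⁅⁅X, Y⁆, Z⁆ = 0)
    (qb : h × h → h × h → h × h)
    (hqb : ∀ u v : h × h,
      qb u v = (⁅u.1, v.1⁆ - ⁅u.2, v.2⁆, -⁅u.1, v.2⁆ - ⁅u.2, v.1⁆))
    (J : h × h → h × h) (hJ : ∀ u : h × h, J u = (-u.2, u.1)) :
    (∀ u v w : h × h, qb (qb u v) w + qb (qb v w) u + qb (qb w u) v = 0) ∧
    (∀ u v : h × h, J (qb u v) = -qb (J u) v) ∧
    (∀ u v : h × h, J (qb u v) = -qb u (J v)) :=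
  qkcf_conjugate_complexification_general h hnil qb hqb J hJ
end

section
/- Let (g,J) be a quasi-Kähler Chern-flat Lie algebra of complex dimension 4 with J non-integrable. Then there exists a basis Z₁,Z₂,Z₃,Z₄ of g^{1,0} such that [Z₁,Z₂] = conj(Z₃) and all other brackets among the Zᵢ and their conjugates vanish. -/
/-! For `x, y ∈ p`, the Jacobi identity and `[p, q] = 0` show that `σ [x, y]` brackets trivially
with all of `p`, i.e. lies in the radical `Z` of the bracket on `p`. Fix `[u, v] ≠ 0` and
`w = σ [u, v] ∈ Z`; any `t ∈ Z` independent of `w` completes `u, v, w` to the required basis.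
If there were none, `Z = ℂ w`, so every bracket in `p` is a multiple of `[u, v]`. Then
`p = span {u, v} ⊕ C` with `C` the centralizer of `u` and `v` in `p`; this `C` is
2-dimensional and contains the central vector `w`, hence is abelian, hence lies in `Z`,
contradicting `dim Z = 1`. -/

open Module Submodule LieAlgebra

section BracketRadical

variable {K L : Type*} [Field K] [LieRing L] [LieAlgebra K L] {p : Submodule K L}

variable (p) in
def bracketRadical : Submodule K L where
  carrier := {t | t ∈ p ∧ ∀ y ∈ p, ⁅t, y⁆ = 0}
  add_mem' := fun ⟨hx, hx'⟩ ⟨hy, hy'⟩ =>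
    ⟨p.add_mem hx hy, fun z hz => by rw [add_lie, hx' z hz, hy' z hz, add_zero]⟩
  zero_mem' := ⟨p.zero_mem, fun _ _ => zero_lie _⟩
  smul_mem' := fun a _ ⟨hx, hx'⟩ =>
    ⟨p.smul_mem a hx, fun z hz => by rw [smul_lie, hx' z hz, smul_zero]⟩

theorem bracketRadical_le : bracketRadical p ≤ p := fun _ h => h.1

theorem lie_eq_zero_of_mem_bracketRadical_right {u t : L} (ht : t ∈ bracketRadical p)
    (hu : u ∈ p) : ⁅u, t⁆ = 0 := by
  rw [← lie_skew, ht.2 u hu, neg_zero]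

theorem conj_lie_mem_bracketRadical {σ : L → L} {q : Submodule K L}
    (hσbr : ∀ u v : L, σ ⁅u, v⁆ = ⁅σ u, σ v⁆)
    (hσp : ∀ u ∈ p, σ u ∈ q) (hσq : ∀ u ∈ q, σ u ∈ p) (hCF : ∀ u ∈ p, ∀ v ∈ q, ⁅u, v⁆ = 0)
    (hQK : ∀ u ∈ p, ∀ v ∈ p, ⁅u, v⁆ ∈ q) {x y : L} (hx : x ∈ p) (hy : y ∈ p) :
    σ ⁅x, y⁆ ∈ bracketRadical p := by
  refine ⟨hσq _ (hQK x hx y hy), fun z hz => ?_⟩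
  have hconj : ∀ a ∈ p, ⁅σ a, z⁆ = 0 := fun a ha => by
    rw [← lie_skew, hCF z hz _ (hσp a ha), neg_zero]
  rw [hσbr, lie_lie, hconj x hx, hconj y hy, lie_zero, lie_zero, sub_zero]

theorem lie_eq_zero_of_mem_span {x y : L} {s : Set L} (h : ∀ z ∈ s, ⁅y, z⁆ = 0)
    (hx : x ∈ span K s) : ⁅y, x⁆ = 0 :=
  span_le (p := LinearMap.ker (ad K L y)).mpr h hx

theorem linearIndependent_pair_of_lie_ne_zero {u v : L} (huv : ⁅u, v⁆ ≠ 0) :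
    LinearIndependent K ![u, v] := by
  have hu : u ≠ 0 := by rintro rfl; exact huv (zero_lie v)
  refine (LinearIndependent.pair_iff' hu).mpr fun a h => huv ?_
  rw [← h, lie_smul, lie_self, smul_zero]

theorem disjoint_span_pair_ker_ad {u v : L} (huv : ⁅u, v⁆ ≠ 0) :
    Disjoint (span K {u, v}) (LinearMap.ker (ad K L u) ⊓ LinearMap.ker (ad K L v)) := by
  rw [disjoint_iff_inf_le]
  rintro _ ⟨hx, hxu, hxv⟩
  obtain ⟨a, b, rfl⟩ := mem_span_pair.mp hx
  change ⁅u, a • u + b • v⁆ = 0 at hxu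
  change ⁅v, a • u + b • v⁆ = 0 at hxv
  simp only [lie_add, lie_smul, lie_self, smul_zero, zero_add, add_zero, ← lie_skew v u,
    smul_neg, neg_eq_zero, smul_eq_zero, huv, or_false] at hxu hxv
  simp [hxu, hxv]

theorem span_pair_sup_inf_ker_ad {u v : L} (hu : u ∈ p) (hv : v ∈ p)
    (hbr : ∀ x ∈ p, ∀ y ∈ p, ⁅x, y⁆ ∈ K ∙ ⁅u, v⁆) :
    span K {u, v} ⊔ (p ⊓ (LinearMap.ker (ad K L u) ⊓ LinearMap.ker (ad K L v))) = p := by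
  refine le_antisymm (sup_le (span_le.mpr (Set.insert_subset hu (by simpa using hv)))
    inf_le_left) fun y hy => ?_
  obtain ⟨α, hα⟩ := mem_span_singleton.mp (hbr u hu y hy)
  obtain ⟨β, hβ⟩ := mem_span_singleton.mp (hbr v hv y hy)
  refine mem_sup.mpr ⟨-β • u + α • v, mem_span_pair.mpr ⟨_, _, rfl⟩,
    y + β • u - α • v, ⟨?_, ?_, ?_⟩, by module⟩
  · exact sub_mem (add_mem hy (smul_mem _ _ hu)) (smul_mem _ _ hv)
  · change ⁅u, y + β • u - α • v⁆ = 0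
    rw [lie_sub, lie_add, lie_smul, lie_smul, lie_self, smul_zero, add_zero, hα, sub_self]
  · change ⁅v, y + β • u - α • v⁆ = 0
    rw [lie_sub, lie_add, lie_smul, lie_smul, lie_self, smul_zero, sub_zero, ← hβ, ← lie_skew v u,
      smul_neg, add_neg_cancel]

theorem finrank_inf_ker_ad_add_two [FiniteDimensional K p] {u v : L} (hu : u ∈ p) (hv : v ∈ p)
    (huv : ⁅u, v⁆ ≠ 0) (hbr : ∀ x ∈ p, ∀ y ∈ p, ⁅x, y⁆ ∈ K ∙ ⁅u, v⁆) :
    finrank K ↥(p ⊓ (LinearMap.ker (ad K L u) ⊓ LinearMap.ker (ad K L v))) + 2 = finrank K p := by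
  have : FiniteDimensional K ↥(span K {u, v}) :=
    finiteDimensional_of_le (span_le.mpr (Set.insert_subset hu (by simpa using hv)))
  have : FiniteDimensional K ↥(p ⊓ (LinearMap.ker (ad K L u) ⊓ LinearMap.ker (ad K L v))) :=
    finiteDimensional_of_le inf_le_left
  have h := finrank_sup_add_finrank_inf_eq (span K {u, v})
    (p ⊓ (LinearMap.ker (ad K L u) ⊓ LinearMap.ker (ad K L v)))
  rw [span_pair_sup_inf_ker_ad hu hv hbr,
    ((disjoint_span_pair_ker_ad huv).mono_right inf_le_right).eq_bot, finrank_bot,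
    ← Matrix.range_cons_cons_empty u v ![], finrank_span_eq_card
      (linearIndependent_pair_of_lie_ne_zero huv), Fintype.card_fin] at h
  omega

theorem lie_eq_zero_of_finrank_le_two {W : Submodule K L} [FiniteDimensional K W]
    (hW : finrank K W ≤ 2) {w : L} (hwW : w ∈ W) (hw0 : w ≠ 0) (hw : ∀ y ∈ W, ⁅w, y⁆ = 0)
    {x y : L} (hx : x ∈ W) (hy : y ∈ W) : ⁅x, y⁆ = 0 := by
  by_cases hxw : x ∈ K ∙ w
  · obtain ⟨a, rfl⟩ := mem_span_singleton.mp hxw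
    rw [smul_lie, hw y hy, smul_zero]
  have hli : LinearIndependent K ![w, x] :=
    (LinearIndependent.pair_iff' hw0).mpr fun a h => hxw (mem_span_singleton.mpr ⟨a, h⟩)
  have hspan : span K {w, x} = W := by
    refine eq_of_le_of_finrank_le (span_le.mpr (Set.insert_subset hwW (by simpa using hx))) ?_
    rw [← Matrix.range_cons_cons_empty w x ![], finrank_span_eq_card hli]
    simpa using hW
  refine lie_eq_zero_of_mem_span (s := {w, x}) ?_ (hspan ▸ hy)
  rintro z (rfl | rfl)
  · rw [← lie_skew, hw x hx, neg_zero]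
  · exact lie_self z

theorem two_le_finrank_bracketRadical [FiniteDimensional K p] (hp : finrank K p = 4) {u v : L}
    (hu : u ∈ p) (hv : v ∈ p) (huv : ⁅u, v⁆ ≠ 0) (hbr : ∀ x ∈ p, ∀ y ∈ p, ⁅x, y⁆ ∈ K ∙ ⁅u, v⁆)
    {w : L} (hw : w ∈ bracketRadical p) (hw0 : w ≠ 0) :
    2 ≤ finrank K (bracketRadical p) := by
  set C := p ⊓ (LinearMap.ker (ad K L u) ⊓ LinearMap.ker (ad K L v))
  have : FiniteDimensional K C := finiteDimensional_of_le inf_le_left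
  have : FiniteDimensional K (bracketRadical p) := finiteDimensional_of_le bracketRadical_le
  have hC : finrank K C = 2 :=
    Nat.add_right_cancel ((finrank_inf_ker_ad_add_two hu hv huv hbr).trans hp)
  have hwC : w ∈ C := ⟨hw.1, lie_eq_zero_of_mem_bracketRadical_right hw hu,
    lie_eq_zero_of_mem_bracketRadical_right hw hv⟩
  have hCle : C ≤ bracketRadical p := by
    intro k hk
    refine ⟨hk.1, fun y hy => ?_⟩
    rw [← span_pair_sup_inf_ker_ad hu hv hbr] at hy
    obtain ⟨s, hs, k', hk', rfl⟩ := mem_sup.mp hy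
    rw [lie_add, lie_eq_zero_of_finrank_le_two hC.le hwC hw0 (fun y hy => hw.2 y hy.1) hk hk',
      add_zero]
    refine lie_eq_zero_of_mem_span ?_ hs
    rintro z (rfl | rfl)
    · rw [← lie_skew]; exact neg_eq_zero.mpr hk.2.1
    · rw [← lie_skew]; exact neg_eq_zero.mpr hk.2.2
  exact hC ▸ finrank_mono hCle

theorem linearIndependent_of_mem_bracketRadical {u v w t : L} (hu : u ∈ p) (hv : v ∈ p)
    (huv : ⁅u, v⁆ ≠ 0) (hw : w ∈ bracketRadical p) (ht : t ∈ bracketRadical p) (hw0 : w ≠ 0)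
    (htw : t ∉ K ∙ w) : LinearIndependent K ![u, v, w, t] := by
  have hwt : LinearIndependent K ![w, t] :=
    (LinearIndependent.pair_iff' hw0).mpr fun a h => htw (mem_span_singleton.mpr ⟨a, h⟩)
  refine linearIndependent_finCons.mpr ⟨linearIndependent_finCons.mpr ⟨hwt, fun h => huv ?_⟩,
    fun h => huv ?_⟩
  · refine lie_eq_zero_of_mem_span ?_ h
    rintro _ ⟨i, rfl⟩
    fin_cases i
    · exact lie_eq_zero_of_mem_bracketRadical_right hw hu
    · exact lie_eq_zero_of_mem_bracketRadical_right ht hu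
  · rw [← lie_skew, neg_eq_zero]
    refine lie_eq_zero_of_mem_span ?_ h
    rintro _ ⟨i, rfl⟩
    fin_cases i
    · exact lie_self v
    · exact lie_eq_zero_of_mem_bracketRadical_right hw hv
    · exact lie_eq_zero_of_mem_bracketRadical_right ht hv

end BracketRadical

section Conjugation

variable {K L : Type*} [Field K] [StarRing K] [LieRing L] [LieAlgebra K L] {σ : L → L}
  {p q : Submodule K L}

theorem conj_ne_zero (hσσ : ∀ u : L, σ (σ u) = u)
    (hσsmul : ∀ (c : K) (u : L), σ (c • u) = (starRingEnd K) c • σ u) {x : L} (hx : x ≠ 0) :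
    σ x ≠ 0 := fun h => hx <| by
  rw [← hσσ x, h]
  simpa using hσsmul 0 0

theorem mem_span_singleton_of_conj_mem (hσσ : ∀ u : L, σ (σ u) = u)
    (hσsmul : ∀ (c : K) (u : L), σ (c • u) = (starRingEnd K) c • σ u) {x y : L}
    (h : σ x ∈ K ∙ σ y) : x ∈ K ∙ y := by
  obtain ⟨a, ha⟩ := mem_span_singleton.mp h
  exact mem_span_singleton.mpr ⟨starRingEnd K a, by rw [← hσσ x, ← ha, hσsmul, hσσ]⟩

theorem exists_mem_bracketRadical_notMem_span_conj_lie [FiniteDimensional K p]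
    (hp : finrank K p = 4) (hσσ : ∀ u : L, σ (σ u) = u)
    (hσsmul : ∀ (c : K) (u : L), σ (c • u) = (starRingEnd K) c • σ u)
    (hσbr : ∀ u v : L, σ ⁅u, v⁆ = ⁅σ u, σ v⁆)
    (hσp : ∀ u ∈ p, σ u ∈ q) (hσq : ∀ u ∈ q, σ u ∈ p) (hCF : ∀ u ∈ p, ∀ v ∈ q, ⁅u, v⁆ = 0)
    (hQK : ∀ u ∈ p, ∀ v ∈ p, ⁅u, v⁆ ∈ q) {u v : L} (hu : u ∈ p) (hv : v ∈ p)
    (huv : ⁅u, v⁆ ≠ 0) : ∃ t ∈ bracketRadical p, t ∉ K ∙ σ ⁅u, v⁆ := by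
  have hw := conj_lie_mem_bracketRadical hσbr hσp hσq hCF hQK hu hv
  have hw0 := conj_ne_zero hσσ hσsmul huv
  refine SetLike.not_le_iff_exists.mp fun hle => ?_
  have hbr : ∀ x ∈ p, ∀ y ∈ p, ⁅x, y⁆ ∈ K ∙ ⁅u, v⁆ := fun x hx y hy =>
    mem_span_singleton_of_conj_mem hσσ hσsmul
      (hle (conj_lie_mem_bracketRadical hσbr hσp hσq hCF hQK hx hy))
  have := finrank_mono hle
  rw [finrank_span_singleton hw0] at this
  have := two_le_finrank_bracketRadical hp hu hv huv hbr hw hw0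
  omega

end Conjugation

/-- `L` stands for `g ⊗ ℂ`, with `p = g^{1,0}`, `q = g^{0,1}` and `σ` the conjugation. -/
theorem qkcf_dim4_classification_general
    (L : Type*) [LieRing L] [LieAlgebra ℂ L] [Module ℝ L]
    (σ : L →ₗ[ℝ] L)
    (hσσ : ∀ u : L, σ (σ u) = u)
    (hσsmul : ∀ (c : ℂ) (u : L), σ (c • u) = (starRingEnd ℂ) c • σ u)
    (hσbr : ∀ u v : L, σ ⁅u, v⁆ = ⁅σ u, σ v⁆)
    (p q : Submodule ℂ L)
    (hσp : ∀ u ∈ p, σ u ∈ q) (hσq : ∀ u ∈ q, σ u ∈ p)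
    (hCF : ∀ u ∈ p, ∀ v ∈ q, ⁅u, v⁆ = (0 : L))
    (hQK : ∀ u ∈ p, ∀ v ∈ p, ⁅u, v⁆ ∈ q)
    (hdim : Module.finrank ℂ p = 4)
    (hnonint : ∃ u ∈ p, ∃ v ∈ p, ⁅u, v⁆ ≠ (0 : L)) :
    ∃ Z : Fin 4 → L, (∀ i, Z i ∈ p) ∧ LinearIndependent ℂ Z ∧
      Submodule.span ℂ (Set.range Z) = p ∧
      ⁅Z 0, Z 1⁆ = σ (Z 2) ∧
      (∀ i j : Fin 4, (i, j) ≠ ((0 : Fin 4), (1 : Fin 4)) →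
        (j, i) ≠ ((0 : Fin 4), (1 : Fin 4)) → ⁅Z i, Z j⁆ = 0) ∧
      (∀ i j : Fin 4, ⁅Z i, σ (Z j)⁆ = 0) := by
  obtain ⟨u, hu, v, hv, huv⟩ := hnonint
  have : FiniteDimensional ℂ p := Module.finite_of_finrank_eq_succ hdim
  have hw := conj_lie_mem_bracketRadical hσbr hσp hσq hCF hQK hu hv
  obtain ⟨t, ht, htw⟩ := exists_mem_bracketRadical_notMem_span_conj_lie hdim hσσ hσsmul hσbr
    hσp hσq hCF hQK hu hv huv
  have hli := linearIndependent_of_mem_bracketRadical hu hv huv hw ht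
    (conj_ne_zero hσσ hσsmul huv) htw
  have hmem : ∀ i, ![u, v, σ ⁅u, v⁆, t] i ∈ p := by
    intro i; fin_cases i <;> simp [hu, hv, hw.1, ht.1]
  refine ⟨_, hmem, hli, ?_, (hσσ _).symm, fun i j hij hji => ?_,
    fun i j => hCF _ (hmem i) _ (hσp _ (hmem j))⟩
  · refine eq_of_le_of_finrank_le (span_le.mpr (Set.range_subset_iff.mpr hmem)) ?_
    rw [finrank_span_eq_card hli, hdim, Fintype.card_fin]
  · fin_cases i <;> fin_cases j <;>
      simp [hu, hv, hw.1, ht.1, hw.2, ht.2, lie_eq_zero_of_mem_bracketRadical_right hw,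
        lie_eq_zero_of_mem_bracketRadical_right ht] at hij hji ⊢

/-- Classification in complex dimension 4: let `L = g ⊗ ℂ` be the complexification
of a real Lie algebra `g` with almost complex structure `J`, presented abstractly
as a complex Lie algebra `L` with a conjugation `σ` (an involutive, antilinear,
bracket-preserving real-linear map) and complementary complex subspaces
`p = g^{1,0}`, `q = g^{0,1}` swapped by `σ`.  Assume the quasi-Kähler Chern-flat
conditions `[p, q] = 0` and `[p, p] ⊆ q`, that `J` is non-integrable
(`[p, p] ≠ 0`) and that `dim_ℂ p = 4` (i.e. `dim_ℝ g = 8`).  Then there is a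
basis `Z₀, Z₁, Z₂, Z₃` of `p` with `[Z₀, Z₁] = σ Z₂` and all other brackets among
the `Zᵢ` and their conjugates vanishing. -/
theorem qkcf_dim4_classification
    (L : Type*) [LieRing L] [LieAlgebra ℂ L] [Module ℝ L]
    [IsScalarTower ℝ ℂ L] [FiniteDimensional ℂ L]
    (σ : L →ₗ[ℝ] L)
    (hσσ : ∀ u : L, σ (σ u) = u)
    (hσsmul : ∀ (c : ℂ) (u : L), σ (c • u) = (starRingEnd ℂ) c • σ u)
    (hσbr : ∀ u v : L, σ ⁅u, v⁆ = ⁅σ u, σ v⁆)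
    (p q : Submodule ℂ L) (hpq : IsCompl p q)
    (hσp : ∀ u ∈ p, σ u ∈ q) (hσq : ∀ u ∈ q, σ u ∈ p)
    (hCF : ∀ u ∈ p, ∀ v ∈ q, ⁅u, v⁆ = (0 : L))
    (hQK : ∀ u ∈ p, ∀ v ∈ p, ⁅u, v⁆ ∈ q)
    (hdim : Module.finrank ℂ p = 4)
    (hnonint : ∃ u ∈ p, ∃ v ∈ p, ⁅u, v⁆ ≠ (0 : L)) :
    ∃ Z : Fin 4 → L, (∀ i, Z i ∈ p) ∧ LinearIndependent ℂ Z ∧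
      Submodule.span ℂ (Set.range Z) = p ∧
      ⁅Z 0, Z 1⁆ = σ (Z 2) ∧
      (∀ i j : Fin 4, (i, j) ≠ ((0 : Fin 4), (1 : Fin 4)) →
        (j, i) ≠ ((0 : Fin 4), (1 : Fin 4)) → ⁅Z i, Z j⁆ = 0) ∧
      (∀ i j : Fin 4, ⁅Z i, σ (Z j)⁆ = 0) :=
  qkcf_dim4_classification_general L σ hσσ hσsmul hσbr p q hσp hσq hCF hQK hdim hnonint
end

section
/- Let (g,J) be a quasi-Kähler Chern-flat Lie algebra whose center has complex dimension 1. Then the complex dimension of g is odd. -/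
/-! Through `J`, `g` becomes a complex vector space on which the bracket is conjugate-bilinear.
Then Jacobi makes `ad ⁅X, Y⁆` both complex-linear and conjugate-linear, so `g` is two-step
nilpotent and every bracket lies in the centre `z`, a complex line. For a complex functional `f`
that is injective on `z`, `(X, Y) ↦ conj (f ⁅X, Y⁆)` is a complex-bilinear alternating form whose
kernel is exactly `z`. An alternating form has even rank, so `dim_ℂ g - 1` is even. -/

open Module
open scoped Matrix ComplexConjugate
open LieAlgebra Complex

theorem Matrix.det_eq_zero_of_transpose_eq_neg {n R : Type*} [Fintype n] [DecidableEq n]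
    [CommRing R] [NoZeroDivisors R] [NeZero (2 : R)] {M : Matrix n n R} (hM : Mᵀ = -M)
    (hn : Odd (Fintype.card n)) : M.det = 0 := by
  have h : M.det = -M.det := calc
    M.det = Mᵀ.det := M.det_transpose.symm
    _ = -M.det := by rw [hM, det_neg, hn.neg_one_pow, neg_one_mul]
  have h2 : (2 : R) * M.det = 0 := by linear_combination h
  exact (mul_eq_zero.mp h2).resolve_left two_ne_zero

namespace LinearMap

theorem IsRefl.nondegenerate_restrict_of_isCompl_ker {R M : Type*} [CommRing R] [AddCommGroup M]
    [Module R M] {B : M →ₗ[R] M →ₗ[R] R} (hB : B.IsRefl) {W : Submodule R M}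
    (hW : IsCompl W (ker B)) : (B.domRestrict₁₂ W W).Nondegenerate := by
  have hB' : (B.domRestrict₁₂ W W).IsRefl := fun x y ↦ hB (W.subtype x) (W.subtype y)
  rw [hB'.nondegenerate_iff_separatingLeft]
  rintro ⟨x, hxW⟩ hx
  suffices x ∈ W ⊓ ker B by simpa [hW.inf_eq_bot] using this
  refine ⟨hxW, ext fun y ↦ ?_⟩
  obtain ⟨u, hu, v, hv, rfl⟩ : ∃ u ∈ W, ∃ v ∈ ker B, u + v = y := by
    rw [← Submodule.mem_sup, hW.sup_eq_top]; exact Submodule.mem_top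
  have hxv : B x v = 0 := hB v x (by simp [mem_ker.mp hv])
  rw [map_add, hxv, add_zero, zero_apply]
  exact hx ⟨u, hu⟩

variable {K V : Type*} [Field K] [NeZero (2 : K)] [AddCommGroup V] [Module K V]
  [FiniteDimensional K V] {B : V →ₗ[K] V →ₗ[K] K}

theorem IsAlt.even_finrank_of_separatingLeft (hB : B.IsAlt) (hB' : B.SeparatingLeft) :
    Even (finrank K V) := by
  classical
  let b := finBasis K V
  by_contra hodd
  have hskew : (toMatrix₂ b b B)ᵀ = -toMatrix₂ b b B := by
    ext i j
    exact (hB.neg _ _).symm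
  exact (separatingLeft_iff_det_ne_zero b).mp hB'
    (Matrix.det_eq_zero_of_transpose_eq_neg hskew (by simpa using Nat.not_even_iff_odd.mp hodd))

theorem IsAlt.even_finrank_sub_finrank_ker (hB : B.IsAlt) :
    Even (finrank K V - finrank K (ker B)) := by
  obtain ⟨W, hW⟩ := (ker B).exists_isCompl
  have hsum := Submodule.finrank_add_eq_of_isCompl hW
  rw [show finrank K V - finrank K (ker B) = finrank K W by omega]
  have hBW : (B.domRestrict₁₂ W W).IsAlt := fun x ↦ hB x
  exact hBW.even_finrank_of_separatingLeft
    (hB.isRefl.nondegenerate_restrict_of_isCompl_ker hW.symm).1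

end LinearMap

theorem Submodule.exists_dual_disjoint_ker_of_finrank_le_one {K V : Type*} [Field K]
    [AddCommGroup V] [Module K V] {p : Submodule K V} [FiniteDimensional K p]
    (hp : finrank K p ≤ 1) : ∃ f : Dual K V, Disjoint p (LinearMap.ker f) := by
  obtain ⟨v, hv⟩ := finrank_le_one_iff.mp hp
  have hmul : ∀ x ∈ p, ∃ c : K, c • (v : V) = x := fun x hx ↦
    (hv ⟨x, hx⟩).imp fun _ hc ↦ congrArg Subtype.val hc
  rcases eq_or_ne (v : V) 0 with hv0 | hv0
  · refine ⟨0, disjoint_def.mpr fun x hx _ ↦ ?_⟩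
    obtain ⟨c, rfl⟩ := hmul x hx
    rw [hv0, smul_zero]
  · obtain ⟨f, hf⟩ := Projective.exists_dual_ne_zero K hv0
    refine ⟨f, disjoint_def.mpr fun x hx hfx ↦ ?_⟩
    obtain ⟨c, rfl⟩ := hmul x hx
    rw [LinearMap.mem_ker, map_smul, smul_eq_mul, mul_eq_zero] at hfx
    rw [hfx.resolve_right hf, zero_smul]

theorem Complex.smul_eq_re_smul_add_im_smul {E : Type*} [AddCommGroup E] [Module ℂ E]
    [Module ℝ E] [IsScalarTower ℝ ℂ E] (c : ℂ) (x : E) : c • x = c.re • x + c.im • (I • x) := by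
  conv_lhs => rw [← c.re_add_im]
  rw [add_smul, mul_smul, ← coe_algebraMap, algebraMap_smul, algebraMap_smul]

section ConjugateLinearBracket

variable {g : Type*} [LieRing g] [LieAlgebra ℝ g] [Module ℂ g] [IsScalarTower ℝ ℂ g]

theorem smul_lie_eq_conj_smul (hI : ∀ X Y : g, ⁅I • X, Y⁆ = -(I • ⁅X, Y⁆)) (c : ℂ) (X Y : g) :
    ⁅c • X, Y⁆ = conj c • ⁅X, Y⁆ := by
  rw [c.smul_eq_re_smul_add_im_smul, (conj c).smul_eq_re_smul_add_im_smul, add_lie, smul_lie,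
    smul_lie, hI, conj_re, conj_im, neg_smul, smul_neg]

theorem lie_smul_eq_conj_smul (hI : ∀ X Y : g, ⁅I • X, Y⁆ = -(I • ⁅X, Y⁆)) (c : ℂ) (X Y : g) :
    ⁅X, c • Y⁆ = conj c • ⁅X, Y⁆ := by
  rw [← lie_skew, smul_lie_eq_conj_smul hI, ← smul_neg, lie_skew]

theorem lie_lie_eq_zero (hI : ∀ X Y : g, ⁅I • X, Y⁆ = -(I • ⁅X, Y⁆)) (X Y Z : g) :
    ⁅⁅X, Y⁆, Z⁆ = 0 := by
  have h : ⁅⁅X, Y⁆, I • Z⁆ = I • ⁅⁅X, Y⁆, Z⁆ := by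
    rw [lie_lie, lie_smul_eq_conj_smul hI, lie_smul_eq_conj_smul hI, lie_smul_eq_conj_smul hI,
      lie_smul_eq_conj_smul hI, ← smul_sub, ← lie_lie, conj_conj]
  have h' : ⁅⁅X, Y⁆, I • Z⁆ = -(I • ⁅⁅X, Y⁆, Z⁆) := by
    rw [lie_smul_eq_conj_smul hI, conj_I, neg_smul]
  have h2 : (2 * I) • ⁅⁅X, Y⁆, Z⁆ = 0 := by
    rw [two_mul, add_smul]
    nth_rw 1 [← h]
    rw [h', neg_add_cancel]
  exact (smul_eq_zero.mp h2).resolve_left (by simp)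

theorem lie_mem_center (hI : ∀ X Y : g, ⁅I • X, Y⁆ = -(I • ⁅X, Y⁆)) (X Y : g) :
    ⁅X, Y⁆ ∈ center ℝ g :=
  (LieModule.mem_maxTrivSubmodule ℝ g g _).mpr fun Z ↦ by
    rw [← lie_skew, lie_lie_eq_zero hI, neg_zero]

def complexCenter (hI : ∀ X Y : g, ⁅I • X, Y⁆ = -(I • ⁅X, Y⁆)) : Submodule ℂ g where
  carrier := center ℝ g
  add_mem' := add_mem
  zero_mem' := zero_mem _
  smul_mem' c X hX := (LieModule.mem_maxTrivSubmodule ℝ g g _).mpr fun Y ↦ by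
    rw [lie_smul_eq_conj_smul hI, (LieModule.mem_maxTrivSubmodule ℝ g g X).mp hX Y, smul_zero]

theorem finrank_center_eq_two_mul (hI : ∀ X Y : g, ⁅I • X, Y⁆ = -(I • ⁅X, Y⁆)) :
    finrank ℝ (center ℝ g) = 2 * finrank ℂ (complexCenter hI) := by
  rw [← finrank_real_complex, finrank_mul_finrank]
  rfl

def conjLieForm (hI : ∀ X Y : g, ⁅I • X, Y⁆ = -(I • ⁅X, Y⁆)) (f : Dual ℂ g) :
    g →ₗ[ℂ] g →ₗ[ℂ] ℂ :=
  LinearMap.mk₂ ℂ (fun X Y ↦ conj (f ⁅X, Y⁆))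
    (fun X X' Y ↦ by rw [add_lie, map_add, map_add])
    (fun c X Y ↦ by rw [smul_lie_eq_conj_smul hI, map_smul, smul_eq_mul, map_mul, conj_conj,
      smul_eq_mul])
    (fun X Y Y' ↦ by rw [lie_add, map_add, map_add])
    (fun c X Y ↦ by rw [lie_smul_eq_conj_smul hI, map_smul, smul_eq_mul, map_mul, conj_conj,
      smul_eq_mul])

theorem conjLieForm_apply (hI : ∀ X Y : g, ⁅I • X, Y⁆ = -(I • ⁅X, Y⁆)) (f : Dual ℂ g) (X Y : g) :
    conjLieForm hI f X Y = conj (f ⁅X, Y⁆) :=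
  rfl

theorem isAlt_conjLieForm (hI : ∀ X Y : g, ⁅I • X, Y⁆ = -(I • ⁅X, Y⁆)) (f : Dual ℂ g) :
    (conjLieForm hI f).IsAlt := fun X ↦ by
  rw [conjLieForm_apply, lie_self, map_zero, map_zero]

theorem ker_conjLieForm (hI : ∀ X Y : g, ⁅I • X, Y⁆ = -(I • ⁅X, Y⁆)) {f : Dual ℂ g}
    (hf : Disjoint (complexCenter hI) (LinearMap.ker f)) :
    LinearMap.ker (conjLieForm hI f) = complexCenter hI := by
  have hfinj : ∀ X Y : g, f ⁅X, Y⁆ = 0 ↔ ⁅X, Y⁆ = 0 := fun X Y ↦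
    ⟨fun h ↦ Submodule.disjoint_def.mp hf _ (lie_mem_center hI X Y) h, fun h ↦ by rw [h, map_zero]⟩
  ext X
  change conjLieForm hI f X = 0 ↔ X ∈ center ℝ g
  rw [LieModule.mem_maxTrivSubmodule, LinearMap.ext_iff]
  simp only [conjLieForm_apply, LinearMap.zero_apply, map_eq_zero, hfinj]
  exact forall_congr' fun Y ↦ by rw [← lie_skew, neg_eq_zero]

theorem odd_finrank_of_finrank_complexCenter_eq_one [FiniteDimensional ℂ g]
    (hI : ∀ X Y : g, ⁅I • X, Y⁆ = -(I • ⁅X, Y⁆)) (hZ : finrank ℂ (complexCenter hI) = 1) :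
    Odd (finrank ℂ g) := by
  obtain ⟨f, hf⟩ := (complexCenter hI).exists_dual_disjoint_ker_of_finrank_le_one hZ.le
  have heven := (isAlt_conjLieForm hI f).even_finrank_sub_finrank_ker
  rw [ker_conjLieForm hI hf, hZ] at heven
  have hpos : 1 ≤ finrank ℂ g := hZ ▸ Submodule.finrank_le _
  obtain ⟨k, hk⟩ := heven
  exact ⟨k, by omega⟩

end ConjugateLinearBracket

theorem qkcf_center_dim_one_odd_general (g : Type*) [LieRing g] [LieAlgebra ℝ g]
    [FiniteDimensional ℝ g] (n : ℕ)
    (J : g →ₗ[ℝ] g) (hJ : ∀ X : g, J (J X) = -X)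
    (h1 : ∀ X Y : g, J ⁅X, Y⁆ = -⁅J X, Y⁆)
    (hdim : Module.finrank ℝ g = 2 * n)
    (hcen : Module.finrank ℝ (LieAlgebra.center ℝ g : LieIdeal ℝ g) = 2) :
    Odd n := by
  let : Module ℂ g := Module.compHom g (Complex.lift ⟨J, LinearMap.ext hJ⟩).toRingHom
  have hIJ : ∀ X : g, I • X = J X := fun X ↦ by
    change Complex.lift ⟨J, _⟩ I X = J X
    simp
  have : IsScalarTower ℝ ℂ g := ⟨fun r c X ↦ by
    change Complex.lift ⟨J, _⟩ (r • c) X = r • Complex.lift ⟨J, _⟩ c X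
    rw [map_smul, LinearMap.smul_apply]⟩
  have : FiniteDimensional ℂ g := .of_restrictScalars_finite ℝ ℂ g
  have hI : ∀ X Y : g, ⁅I • X, Y⁆ = -(I • ⁅X, Y⁆) := fun X Y ↦ by
    rw [hIJ, hIJ, h1, neg_neg]
  have hn : finrank ℂ g = n := by
    have := finrank_mul_finrank ℝ ℂ g
    rw [finrank_real_complex, hdim] at this
    omega
  have hZ : finrank ℂ (complexCenter hI) = 1 := by
    have := finrank_center_eq_two_mul hI
    omega
  exact hn ▸ odd_finrank_of_finrank_complexCenter_eq_one hI hZ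

/-- If `(g, J)` is a quasi-Kähler Chern-flat Lie algebra (a real Lie algebra of
real dimension `2n` with `J² = -id` and `J[X,Y] = -[JX,Y] = -[X,JY]`) whose
center has complex dimension one (real dimension two), then `n` is odd. -/
theorem qkcf_center_dim_one_odd (g : Type*) [LieRing g] [LieAlgebra ℝ g]
    [FiniteDimensional ℝ g] (n : ℕ)
    (J : g →ₗ[ℝ] g) (hJ : ∀ X : g, J (J X) = -X)
    (h1 : ∀ X Y : g, J ⁅X, Y⁆ = -⁅J X, Y⁆)
    (h2 : ∀ X Y : g, J ⁅X, Y⁆ = -⁅X, J Y⁆)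
    (hdim : Module.finrank ℝ g = 2 * n)
    (hcen : Module.finrank ℝ (LieAlgebra.center ℝ g : LieIdeal ℝ g) = 2) :
    Odd n :=
  qkcf_center_dim_one_odd_general g n J hJ h1 hdim hcen
end

section
/- Let (g,J) be a quasi-Kähler Chern-flat Lie algebra with center z of complex dimension 1, dim_C g = n. Then there exists a basis Z₁,...,Zₙ of g^{1,0} such that Z̄ₙ generates z^{0,1} and [Zᵢ,Zⱼ] = Z̄ₙ for all 1 ≤ i < j ≤ n-1. -/
/-!
Because `[p, q] = 0` and `[p, p] ⊆ q`, the Jacobi identity makes every bracket of two elements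
of `p` central, and a central element splits into central components in `p` and `q`. The
conjugation `σ` swaps `z ∩ p` and `z ∩ q`, so both are lines, spanned by some `Z` and by `σ Z`.
Hence `[a, b] = ω(a, b) σ Z` on `p` for an alternating form `ω` whose radical is `ℂ Z`.
A nondegenerate alternating form has a basis with `ω(eᵢ, eⱼ) = 1` for all `i < j`: choose
`u, v` with `ω(u, v) = 1` and extend such a basis `(wₗ)` of their orthogonal by
`u, v, wₗ - u + v`. Applied to a complement of the radical, this gives the `Zᵢ`, `i < n - 1`.
-/

open Module

theorem Module.Basis.span_range_coe {R M ι : Type*} [Semiring R] [AddCommMonoid M] [Module R M]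
    {p : Submodule R M} (b : Basis ι R p) :
    Submodule.span R (Set.range fun i => (b i : M)) = p := by
  rw [show (fun i => (b i : M)) = p.subtype ∘ b from rfl, Set.range_comp, Submodule.span_image,
    b.span_eq, Submodule.map_subtype_top]

namespace LinearMap.BilinForm

variable {K V : Type*} [Field K] [AddCommGroup V] [Module K V] {B : LinearMap.BilinForm K V}

theorem _root_.LinearMap.SeparatingLeft.exists_apply_eq_one (hsep : B.SeparatingLeft) {u : V}
    (hu : u ≠ 0) : ∃ v, B u v = 1 := by
  obtain ⟨w, hw⟩ : ∃ w, B u w ≠ 0 := by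
    by_contra! h
    exact hu (hsep u h)
  exact ⟨(B u w)⁻¹ • w, by rw [map_smul, smul_eq_mul, inv_mul_cancel₀ hw]⟩

theorem IsRefl.separatingLeft_restrict_of_isCompl_ker (hB : B.IsRefl) {C : Submodule K V}
    (hC : IsCompl (ker B) C) : (B.restrict C).SeparatingLeft := by
  rw [separatingLeft_iff_ker_eq_bot, ker_restrict_eq_of_codisjoint hC.symm.codisjoint
    fun x _ y hy => hB y x (by rw [mem_ker.mp hy, LinearMap.zero_apply]),
    ← Submodule.disjoint_iff_comap_eq_bot]
  exact hC.symm.disjoint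

namespace IsAlt

theorem sub_smul_add_smul_mem_ker_inf_ker (hB : B.IsAlt) {u v : V} (huv : B u v = 1) (x : V) :
    x - B u x • v + B v x • u ∈ ker (B u) ⊓ ker (B v) := by
  have hvu : B v u = -1 := by rw [← hB.neg_eq, huv]
  simp only [Submodule.mem_inf, mem_ker, map_add, map_sub, map_smul, smul_eq_mul,
    hB.self_eq_zero, huv, hvu]
  constructor <;> ring

theorem finrank_ker_inf_ker_add_two [FiniteDimensional K V] (hB : B.IsAlt) {u v : V}
    (huv : B u v = 1) : finrank K ↥(ker (B u) ⊓ ker (B v)) + 2 = finrank K V := by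
  have hvu : B v u = -1 := by rw [← hB.neg_eq, huv]
  have hsurj : Function.Surjective ((B u).prod (B v)) := fun c =>
    ⟨c.1 • v - c.2 • u, by simp [hB.self_eq_zero, huv, hvu]⟩
  have h := ((B u).prod (B v)).finrank_range_add_finrank_ker
  rwa [range_eq_top.mpr hsurj, finrank_top, finrank_prod, finrank_self, ker_prod,
    add_comm] at h

theorem separatingLeft_restrict_ker_inf_ker (hB : B.IsAlt) (hsep : B.SeparatingLeft) {u v : V}
    (huv : B u v = 1) : (B.restrict (ker (B u) ⊓ ker (B v))).SeparatingLeft := by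
  rintro ⟨a, ha⟩ hW
  obtain ⟨hau, hav⟩ : B a u = 0 ∧ B a v = 0 := by
    rw [hB.eq_iff, hB.eq_iff (x := a)]
    exact ha
  have hBa : ∀ x, B a x = 0 := fun x => by
    simpa [hau, hav] using hW ⟨_, sub_smul_add_smul_mem_ker_inf_ker hB huv x⟩
  exact Subtype.ext (hsep a hBa)

theorem apply_finCons_finCons_eq_one (hB : B.IsAlt) {u v : V} (huv : B u v = 1) {k : ℕ}
    {e : Fin k → V} (heu : ∀ i, B u (e i) = 0) (hev : ∀ i, B v (e i) = 0)
    (he : ∀ i j, i < j → B (e i) (e j) = 1) (i j : Fin (k + 2)) (hij : i < j) :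
    B ((Fin.cons u (Fin.cons v fun l => e l - u + v) : Fin (k + 2) → V) i)
      ((Fin.cons u (Fin.cons v fun l => e l - u + v) : Fin (k + 2) → V) j) = 1 := by
  have hvu : B v u = -1 := by rw [← hB.neg_eq, huv]
  have hue : ∀ l, B (e l) u = 0 := fun l => by rw [← hB.neg_eq, heu, neg_zero]
  have hve : ∀ l, B (e l) v = 0 := fun l => by rw [← hB.neg_eq, hev, neg_zero]
  induction i using Fin.cases <;> induction j using Fin.cases <;>
    try simp only [Fin.succ_lt_succ_iff, lt_self_iff_false, Fin.not_lt_zero] at hij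
  case zero.succ j =>
    induction j using Fin.cases <;> simp [heu, hB.self_eq_zero, huv]
  case succ.succ i j =>
    induction i using Fin.cases <;> induction j using Fin.cases <;>
      try simp only [Fin.succ_lt_succ_iff, lt_self_iff_false, Fin.not_lt_zero] at hij
    case zero.succ j => simp [hev, hB.self_eq_zero, hvu]
    case succ.succ i j =>
      simp only [Fin.cons_succ, map_add, map_sub, LinearMap.add_apply, LinearMap.sub_apply,
        he i j hij, heu, hev, hue, hve, hB.self_eq_zero, huv, hvu]
      ring
theorem top_le_span_range_finCons_finCons (hB : B.IsAlt) {u v : V} (huv : B u v = 1) {k : ℕ}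
    {e : Fin k → V} (he : Submodule.span K (Set.range e) = ker (B u) ⊓ ker (B v)) :
    ⊤ ≤ Submodule.span K
      (Set.range (Fin.cons u (Fin.cons v fun l => e l - u + v) : Fin (k + 2) → V)) := by
  set S := Submodule.span K
    (Set.range (Fin.cons u (Fin.cons v fun l => e l - u + v) : Fin (k + 2) → V))
  have huS : u ∈ S := Submodule.subset_span ⟨0, rfl⟩
  have hvS : v ∈ S := Submodule.subset_span ⟨1, rfl⟩
  have hWS : ker (B u) ⊓ ker (B v) ≤ S := by
    rw [← he, Submodule.span_le]
    rintro _ ⟨l, rfl⟩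
    show e l ∈ S
    have hl : e l - u + v ∈ S := Submodule.subset_span ⟨l.succ.succ, rfl⟩
    convert S.sub_mem (S.add_mem hl huS) hvS using 1
    abel
  intro x _
  have hx := hWS (sub_smul_add_smul_mem_ker_inf_ker hB huv x)
  convert S.sub_mem (S.add_mem hx (S.smul_mem (B u x) hvS)) (S.smul_mem (B v x) huS) using 1
  abel

theorem exists_basis_apply_eq_one [FiniteDimensional K V] (hB : B.IsAlt)
    (hsep : B.SeparatingLeft) {n : ℕ} (hn : finrank K V = n) :
    ∃ b : Basis (Fin n) K V, ∀ i j, i < j → B (b i) (b j) = 1 := by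
  induction n using Nat.strong_induction_on generalizing V B with
  | _ n ih =>
  rcases Nat.eq_zero_or_pos n with rfl | hpos
  · exact ⟨finBasisOfFinrankEq K V hn, fun i => i.elim0⟩
  have : Nontrivial V := finrank_pos_iff.mp (hn ▸ hpos)
  obtain ⟨u, hu⟩ := exists_ne (0 : V)
  obtain ⟨v, huv⟩ := hsep.exists_apply_eq_one hu
  set W := ker (B u) ⊓ ker (B v)
  have hW : finrank K W + 2 = finrank K V := finrank_ker_inf_ker_add_two hB huv
  obtain ⟨e, he⟩ := ih _ (by omega) (B := B.restrict W) (fun x => hB x)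
    (separatingLeft_restrict_ker_inf_ker hB hsep huv) rfl
  obtain rfl : finrank K W + 2 = n := hW.trans hn
  have hspan := top_le_span_range_finCons_finCons hB huv e.span_range_coe
  refine ⟨basisOfTopLeSpanOfCardEqFinrank _ hspan (by simp [hn]), fun i j hij => ?_⟩
  rw [coe_basisOfTopLeSpanOfCardEqFinrank]
  exact apply_finCons_finCons_eq_one hB huv (fun l => (e l).2.1) (fun l => (e l).2.2) he i j hij

theorem exists_basis_last_eq [FiniteDimensional K V] (hB : B.IsAlt) {r : V}
    (hr : ker B = K ∙ r) (hr0 : r ≠ 0) {m : ℕ} (hm : finrank K V = m + 1) :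
    ∃ b : Basis (Fin (m + 1)) K V,
      b (Fin.last m) = r ∧ ∀ i j : Fin m, i < j → B (b i.castSucc) (b j.castSucc) = 1 := by
  obtain ⟨C, hC⟩ := (ker B).exists_isCompl
  have hCdim : finrank K C = m := by
    have := Submodule.finrank_add_eq_of_isCompl hC
    rw [hr, finrank_span_singleton hr0] at this
    omega
  obtain ⟨e, he⟩ := exists_basis_apply_eq_one (B := B.restrict C) (fun x => hB x)
    (IsRefl.separatingLeft_restrict_of_isCompl_ker hB.isRefl hC) hCdim
  have hrC : r ∉ Submodule.span K (Set.range fun i => (e i : V)) := by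
    rw [e.span_range_coe]
    intro hrC'
    have : r ∈ ker B ⊓ C := ⟨hr ▸ Submodule.mem_span_singleton_self r, hrC'⟩
    rw [hC.inf_eq_bot] at this
    exact hr0 this
  have hli := (e.linearIndependent.map' C.subtype C.ker_subtype).finSnoc hrC
  refine ⟨basisOfLinearIndependentOfCardEqFinrank hli (by simp [hm]), ?_, fun i j hij => ?_⟩
  · simp
  · simpa using he i j hij

end IsAlt

end LinearMap.BilinForm

namespace LieAlgebra

section CommRing

variable {R L : Type*} [CommRing R] [LieRing L] [LieAlgebra R L] {p q : Submodule R L}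

theorem mem_center_of_lie_eq_zero (hpq : p ⊔ q = ⊤) {x : L} (hp : ∀ a ∈ p, ⁅a, x⁆ = 0)
    (hq : ∀ b ∈ q, ⁅b, x⁆ = 0) : x ∈ center R L := by
  refine (LieModule.mem_maxTrivSubmodule R L L x).2 fun y => ?_
  obtain ⟨a, ha, b, hb, rfl⟩ := Submodule.mem_sup.1 (hpq ▸ Submodule.mem_top : y ∈ p ⊔ q)
  rw [add_lie, hp a ha, hq b hb, add_zero]

theorem lie_mem_center_of_mem (hpq : p ⊔ q = ⊤) (hCF : ∀ u ∈ p, ∀ v ∈ q, ⁅u, v⁆ = 0)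
    (hQK : ∀ u ∈ p, ∀ v ∈ p, ⁅u, v⁆ ∈ q) {u v : L} (hu : u ∈ p) (hv : v ∈ p) :
    ⁅u, v⁆ ∈ center R L :=
  mem_center_of_lie_eq_zero hpq (fun a ha => hCF a ha _ (hQK u hu v hv)) fun b hb => by
    rw [leibniz_lie, ← lie_skew b u, ← lie_skew b v, hCF u hu b hb, hCF v hv b hb, neg_zero,
      zero_lie, lie_zero, add_zero]

theorem mem_center_iff_of_mem (hpq : p ⊔ q = ⊤) (hCF : ∀ u ∈ p, ∀ v ∈ q, ⁅u, v⁆ = 0) {a : L}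
    (ha : a ∈ p) : a ∈ center R L ↔ ∀ b ∈ p, ⁅a, b⁆ = 0 := by
  refine ⟨fun h b _ => ?_, fun h => mem_center_of_lie_eq_zero hpq ?_ ?_⟩
  · rw [← lie_skew, (LieModule.mem_maxTrivSubmodule R L L a).1 h b, neg_zero]
  · exact fun b hb => by rw [← lie_skew, h b hb, neg_zero]
  · exact fun b hb => by rw [← lie_skew, hCF a ha b hb, neg_zero]

theorem center_inf_sup_center_inf (hpq : p ⊔ q = ⊤) (hCF : ∀ u ∈ p, ∀ v ∈ q, ⁅u, v⁆ = 0) :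
    (center R L).toSubmodule ⊓ p ⊔ (center R L).toSubmodule ⊓ q = center R L := by
  refine le_antisymm (sup_le inf_le_left inf_le_left) fun x hx => ?_
  obtain ⟨a, ha, b, hb, rfl⟩ := Submodule.mem_sup.1 (hpq ▸ Submodule.mem_top : x ∈ p ⊔ q)
  have haz : a ∈ center R L := by
    refine mem_center_of_lie_eq_zero hpq (fun c hc => ?_) fun d hd => ?_
    · have := (LieModule.mem_maxTrivSubmodule R L L _).1 hx c
      rwa [lie_add, hCF c hc b hb, add_zero] at this
    · rw [← lie_skew, hCF a ha d hd, neg_zero]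
  have hbz : b ∈ center R L := by simpa using sub_mem hx haz
  exact Submodule.add_mem _ (Submodule.mem_sup_left ⟨haz, ha⟩)
    (Submodule.mem_sup_right ⟨hbz, hb⟩)

variable {F : Type*} [FunLike F L L] [AddMonoidHomClass F L L] {σ : F}

theorem map_mem_center (hσσ : ∀ u, σ (σ u) = u) (hσbr : ∀ u v, σ ⁅u, v⁆ = ⁅σ u, σ v⁆) {x : L}
    (hx : x ∈ center R L) : σ x ∈ center R L := by
  refine (LieModule.mem_maxTrivSubmodule R L L _).2 fun y => ?_
  rw [← hσσ y, ← hσbr, (LieModule.mem_maxTrivSubmodule R L L x).1 hx, map_zero]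

theorem center_inf_ne_bot_of_ne_bot (hσσ : ∀ u, σ (σ u) = u)
    (hσbr : ∀ u v, σ ⁅u, v⁆ = ⁅σ u, σ v⁆) (hσq : ∀ u ∈ q, σ u ∈ p)
    (h : (center R L).toSubmodule ⊓ q ≠ ⊥) : (center R L).toSubmodule ⊓ p ≠ ⊥ := by
  obtain ⟨x, ⟨hxz, hxq⟩, hx0⟩ := Submodule.exists_mem_ne_zero_of_ne_bot h
  refine (Submodule.ne_bot_iff _).2 ⟨σ x, ⟨map_mem_center hσσ hσbr hxz, hσq x hxq⟩, fun h0 => ?_⟩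
  exact hx0 (by rw [← hσσ x, h0, map_zero])

end CommRing

section Field

variable {K L : Type*} [Field K] [LieRing L] [LieAlgebra K L] {p q : Submodule K L}

theorem finrank_center_inf_add_finrank_center_inf [FiniteDimensional K L] (hpq : IsCompl p q)
    (hCF : ∀ u ∈ p, ∀ v ∈ q, ⁅u, v⁆ = 0) :
    finrank K ↥((center K L).toSubmodule ⊓ p) + finrank K ↥((center K L).toSubmodule ⊓ q)
      = finrank K (center K L) := by
  have h := Submodule.finrank_sup_add_finrank_inf_eq
    ((center K L).toSubmodule ⊓ p) ((center K L).toSubmodule ⊓ q)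
  rwa [center_inf_sup_center_inf hpq.sup_eq_top hCF,
    (hpq.disjoint.mono inf_le_right inf_le_right).eq_bot, finrank_bot, add_zero, eq_comm] at h

theorem exists_center_inf_eq_span_singleton [FiniteDimensional K L] (hpq : IsCompl p q)
    (hCF : ∀ u ∈ p, ∀ v ∈ q, ⁅u, v⁆ = 0) {F : Type*} [FunLike F L L] [AddMonoidHomClass F L L]
    (σ : F) (hσσ : ∀ u, σ (σ u) = u) (hσbr : ∀ u v, σ ⁅u, v⁆ = ⁅σ u, σ v⁆)
    (hσp : ∀ u ∈ p, σ u ∈ q) (hσq : ∀ u ∈ q, σ u ∈ p)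
    (hcen : finrank K (center K L : LieIdeal K L) = 2) :
    ∃ Z : L, Z ≠ 0 ∧ (center K L).toSubmodule ⊓ p = K ∙ Z ∧
      (center K L).toSubmodule ⊓ q = K ∙ σ Z := by
  have hsum := finrank_center_inf_add_finrank_center_inf hpq hCF
  have hp := center_inf_ne_bot_of_ne_bot hσσ hσbr hσq
  have hq := center_inf_ne_bot_of_ne_bot hσσ hσbr hσp
  rw [Ne, ← Submodule.finrank_eq_zero, Ne, ← Submodule.finrank_eq_zero] at hp hq
  have hp1 : finrank K ↥((center K L).toSubmodule ⊓ p) = 1 := by omega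
  have hq1 : finrank K ↥((center K L).toSubmodule ⊓ q) = 1 := by omega
  obtain ⟨Z, hZ, hZ0⟩ := Submodule.exists_mem_ne_zero_of_ne_bot
    (Submodule.one_le_finrank_iff.1 hp1.ge)
  have hσZ0 : σ Z ≠ 0 := fun h => hZ0 (by rw [← hσσ Z, h, map_zero])
  exact ⟨Z, hZ0, eq_span_singleton_of_mem_of_finrank_eq_one hp1 hZ hZ0,
    eq_span_singleton_of_mem_of_finrank_eq_one hq1 ⟨map_mem_center hσσ hσbr hZ.1, hσp Z hZ.2⟩ hσZ0⟩

theorem exists_bilinForm_lie_eq_smul (p : Submodule K L) {W : L} (hW : W ≠ 0)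
    (hbr : ∀ u ∈ p, ∀ v ∈ p, ⁅u, v⁆ ∈ K ∙ W) :
    ∃ ω : LinearMap.BilinForm K p, ∀ a b : p, ⁅(a : L), (b : L)⁆ = ω a b • W := by
  obtain ⟨f, hf⟩ := Projective.exists_dual_eq_one K hW
  refine ⟨LinearMap.BilinForm.restrict
    ((LieModule.toEnd K L L : L →ₗ[K] Module.End K L).compr₂ f) p, fun a b => ?_⟩
  obtain ⟨c, hc⟩ := Submodule.mem_span_singleton.1 (hbr a a.2 b b.2)
  simp [← hc, hf]

variable {ω : LinearMap.BilinForm K p} {W : L}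

theorem isAlt_of_lie_eq_smul (hW : W ≠ 0) (hω : ∀ a b : p, ⁅(a : L), (b : L)⁆ = ω a b • W) :
    ω.IsAlt := fun a => by
  simpa [hW] using (hω a a).symm

theorem ker_eq_comap_center_of_lie_eq_smul (hpq : p ⊔ q = ⊤)
    (hCF : ∀ u ∈ p, ∀ v ∈ q, ⁅u, v⁆ = 0) (hW : W ≠ 0)
    (hω : ∀ a b : p, ⁅(a : L), (b : L)⁆ = ω a b • W) :
    LinearMap.ker ω = (center K L).toSubmodule.comap p.subtype := by
  ext a
  rw [LinearMap.mem_ker, Submodule.mem_comap, Submodule.subtype_apply,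
    LieSubmodule.mem_toSubmodule, mem_center_iff_of_mem hpq hCF a.2]
  refine ⟨fun h b hb => by simpa [h] using hω a ⟨b, hb⟩, fun h => LinearMap.ext fun b => ?_⟩
  simpa [hW, h b b.2] using (hω a b).symm

end Field

end LieAlgebra

/-- Classification with one-dimensional center: let `L = g ⊗ ℂ` be the
complexification of a quasi-Kähler Chern-flat Lie algebra `(g, J)`, presented
abstractly as a complex Lie algebra `L` with conjugation `σ` and complementary
complex subspaces `p = g^{1,0}`, `q = g^{0,1}` swapped by `σ`, satisfying
`[p, q] = 0` and `[p, p] ⊆ q`.  Assume the center of `g` has complex dimension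
one, i.e. the center of `L` has complex dimension `2`, and `dim_ℂ p = n`.
Then `p` has a basis `Z₀, …, Z_{n-1}` with `Z_{n-1}` central (so `σ Z_{n-1}`
generates `z^{0,1}`) and `[Zᵢ, Zⱼ] = σ Z_{n-1}` for all `i < j ≤ n - 2`. -/
theorem qkcf_center_dim_one_classification
    (L : Type*) [LieRing L] [LieAlgebra ℂ L] [Module ℝ L]
    [FiniteDimensional ℂ L] (n : ℕ) (hn0 : 0 < n)
    (σ : L →ₗ[ℝ] L)
    (hσσ : ∀ u : L, σ (σ u) = u)
    (hσbr : ∀ u v : L, σ ⁅u, v⁆ = ⁅σ u, σ v⁆)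
    (p q : Submodule ℂ L) (hpq : IsCompl p q)
    (hσp : ∀ u ∈ p, σ u ∈ q) (hσq : ∀ u ∈ q, σ u ∈ p)
    (hCF : ∀ u ∈ p, ∀ v ∈ q, ⁅u, v⁆ = (0 : L))
    (hQK : ∀ u ∈ p, ∀ v ∈ p, ⁅u, v⁆ ∈ q)
    (hdim : Module.finrank ℂ p = n)
    (hcen : Module.finrank ℂ (LieAlgebra.center ℂ L : LieIdeal ℂ L) = 2) :
    ∃ Z : Fin n → L, (∀ i, Z i ∈ p) ∧ LinearIndependent ℂ Z ∧
      Submodule.span ℂ (Set.range Z) = p ∧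
      Z ⟨n - 1, by omega⟩ ∈ LieAlgebra.center ℂ L ∧
      (∀ i j : Fin n, (i : ℕ) < (j : ℕ) → (j : ℕ) < n - 1 →
        ⁅Z i, Z j⁆ = σ (Z ⟨n - 1, by omega⟩)) := by
  obtain ⟨m, rfl⟩ : ∃ m, n = m + 1 := ⟨n - 1, by omega⟩
  obtain ⟨Z, hZ0, hzp, hzq⟩ :=
    LieAlgebra.exists_center_inf_eq_span_singleton hpq hCF σ hσσ hσbr hσp hσq hcen
  have hZ : Z ∈ (LieAlgebra.center ℂ L).toSubmodule ⊓ p :=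
    hzp ▸ Submodule.mem_span_singleton_self Z
  have hσZ0 : σ Z ≠ 0 := fun h => hZ0 (by rw [← hσσ Z, h, map_zero])
  obtain ⟨ω, hω⟩ := LieAlgebra.exists_bilinForm_lie_eq_smul p hσZ0 fun u hu v hv =>
    hzq ▸ ⟨LieAlgebra.lie_mem_center_of_mem hpq.sup_eq_top hCF hQK hu hv, hQK u hu v hv⟩
  have hker : LinearMap.ker ω = ℂ ∙ ⟨Z, hZ.2⟩ := by
    rw [LieAlgebra.ker_eq_comap_center_of_lie_eq_smul hpq.sup_eq_top hCF hσZ0 hω,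
      ← LinearMap.submoduleOf_span_singleton_of_mem, ← hzp, Submodule.submoduleOf,
      Submodule.comap_inf, Submodule.comap_subtype_self, inf_top_eq]
  obtain ⟨b, hlast, hb⟩ := (LieAlgebra.isAlt_of_lie_eq_smul hσZ0 hω).exists_basis_last_eq hker
    (by simpa using hZ0) hdim
  have hZlast : (b ⟨m + 1 - 1, by omega⟩ : L) = Z := congrArg Subtype.val hlast
  refine ⟨fun i => b i, fun i => (b i).2, b.linearIndependent.map' _ p.ker_subtype,
    b.span_range_coe, by simp only [hZlast]; exact hZ.1, fun i j hij hj => ?_⟩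
  have hbij := hb ⟨i, by omega⟩ ⟨j, hj⟩ hij
  simp only [Fin.castSucc_mk, Fin.eta] at hbij
  simp only [hω, hbij, hZlast, one_smul]
end

section
/- Let (g,J) be a quasi-Kähler Chern-flat Lie algebra and let L : g → g be a linear map satisfying LJ = -JL and L[X,Y] = -[LX,Y] = -[X,LY] for all X,Y ∈ g. Then L vanishes on the derived algebra [g,g] and L(g) is contained in the center of g. -/
/-!
Since `J` anticommutes with the bracket in each slot, `⁅J X, J Y⁆ = -⁅X, Y⁆`. Applying `L` to
`⁅X, Y⁆ = -⁅J X, J Y⁆` and using `L ⁅A, B⁆ = -⁅L A, B⁆` and `L J = -J L` gives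
`L ⁅X, Y⁆ = ⁅L X, Y⁆`, while the same rule applied directly gives `L ⁅X, Y⁆ = -⁅L X, Y⁆`.
Hence `2 ⁅L X, Y⁆ = 0`, so `L X` is central and `L` kills brackets.
-/

section

variable {g : Type*} [LieRing g]

theorem lie_apply_apply_eq_neg_lie (J : g → g) (hJ : ∀ X, J (J X) = -X)
    (h1 : ∀ X Y : g, J ⁅X, Y⁆ = -⁅J X, Y⁆) (h2 : ∀ X Y : g, J ⁅X, Y⁆ = -⁅X, J Y⁆) (X Y : g) :
    ⁅J X, J Y⁆ = -⁅X, Y⁆ := by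
  have h : J ⁅J X, Y⁆ = ⁅X, Y⁆ := by rw [h1, hJ, neg_lie, neg_neg]
  rw [← h, h2, neg_neg]

theorem lie_apply_left_eq_zero_of_anticomm [IsAddTorsionFree g] {F : Type*} [FunLike F g g]
    [AddMonoidHomClass F g g] (J : g → g) (hJJ : ∀ X Y : g, ⁅J X, J Y⁆ = -⁅X, Y⁆) (L : F)
    (hLJ : ∀ X, L (J X) = -J (L X)) (hL1 : ∀ X Y : g, L ⁅X, Y⁆ = -⁅L X, Y⁆) (X Y : g) :
    ⁅L X, Y⁆ = 0 := by
  have h : L ⁅X, Y⁆ = ⁅L X, Y⁆ :=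
    calc L ⁅X, Y⁆ = -L ⁅J X, J Y⁆ := by rw [hJJ, map_neg, neg_neg]
      _ = ⁅L X, Y⁆ := by rw [hL1, neg_neg, hLJ, neg_lie, hJJ, neg_neg]
  exact self_eq_neg.mp (h.symm.trans (hL1 X Y))

end

theorem deformation_kills_derived_and_lands_in_center_general
    (g : Type*) [LieRing g] [LieAlgebra ℝ g]
    (J : g →ₗ[ℝ] g) (hJ : ∀ X : g, J (J X) = -X)
    (h1 : ∀ X Y : g, J ⁅X, Y⁆ = -⁅J X, Y⁆)
    (h2 : ∀ X Y : g, J ⁅X, Y⁆ = -⁅X, J Y⁆)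
    (L : g →ₗ[ℝ] g)
    (hLJ : ∀ X : g, L (J X) = -J (L X))
    (hL1 : ∀ X Y : g, L ⁅X, Y⁆ = -⁅L X, Y⁆) :
    (∀ X Y : g, L ⁅X, Y⁆ = 0) ∧ (∀ X : g, L X ∈ LieAlgebra.center ℝ g) := by
  have : IsAddTorsionFree g := .of_isTorsionFree ℝ g
  have hLX : ∀ X Y : g, ⁅L X, Y⁆ = 0 :=
    lie_apply_left_eq_zero_of_anticomm J (lie_apply_apply_eq_neg_lie J hJ h1 h2) L hLJ hL1
  refine ⟨fun X Y => by rw [hL1, hLX, neg_zero], fun X => ?_⟩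
  exact (LieModule.mem_maxTrivSubmodule ℝ g g (L X)).mpr fun Y => by rw [← lie_skew, hLX, neg_zero]

/-- Let `(g, J)` be a quasi-Kähler Chern-flat Lie algebra and `L : g → g` a
linear map satisfying `LJ = -JL` and `L[X,Y] = -[LX,Y] = -[X,LY]` (an
infinitesimal deformation of `J`).  Then `L` vanishes on the derived algebra
`[g,g]` and its image lies in the center of `g`. -/
theorem deformation_kills_derived_and_lands_in_center
    (g : Type*) [LieRing g] [LieAlgebra ℝ g] [FiniteDimensional ℝ g]
    (J : g →ₗ[ℝ] g) (hJ : ∀ X : g, J (J X) = -X)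
    (h1 : ∀ X Y : g, J ⁅X, Y⁆ = -⁅J X, Y⁆)
    (h2 : ∀ X Y : g, J ⁅X, Y⁆ = -⁅X, J Y⁆)
    (L : g →ₗ[ℝ] g)
    (hLJ : ∀ X : g, L (J X) = -J (L X))
    (hL1 : ∀ X Y : g, L ⁅X, Y⁆ = -⁅L X, Y⁆)
    (hL2 : ∀ X Y : g, L ⁅X, Y⁆ = -⁅X, L Y⁆) :
    (∀ X Y : g, L ⁅X, Y⁆ = 0) ∧ (∀ X : g, L X ∈ LieAlgebra.center ℝ g) :=
  deformation_kills_derived_and_lands_in_center_general g J hJ h1 h2 L hLJ hL1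
end

section
/- Let g be a quasi-Kähler Chern-flat Lie algebra with almost complex structure J, and let Z₁,Z₂ ∈ g^{1,0} be part of a basis of g^{1,0}, with conjugates Z̄₁,Z̄₂. If [Z₁,Z₂] ∈ span{Z̄₁,Z̄₂}, then [Z₁,Z₂]=0. -/
/-- In a quasi-Kähler Chern-flat Lie algebra (presented via its complexification
`L` with conjugation `σ` and complementary subspaces `p = g^{1,0}`,
`q = g^{0,1}` swapped by `σ`, with `[p,q] = 0` and `[p,p] ⊆ q`): if
`Z₁, Z₂ ∈ p` satisfy `[Z₁, Z₂] = a σZ₁ + b σZ₂` for scalars `a, b`, then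
`[Z₁, Z₂] = 0`. -/
theorem bracket_in_span_of_conjugates_vanishes
    (L : Type*) [LieRing L] [LieAlgebra ℂ L] [Module ℝ L]
    [IsScalarTower ℝ ℂ L]
    (σ : L →ₗ[ℝ] L)
    (hσσ : ∀ u : L, σ (σ u) = u)
    (hσsmul : ∀ (c : ℂ) (u : L), σ (c • u) = (starRingEnd ℂ) c • σ u)
    (hσbr : ∀ u v : L, σ ⁅u, v⁆ = ⁅σ u, σ v⁆)
    (p q : Submodule ℂ L) (hpq : IsCompl p q)
    (hσp : ∀ u ∈ p, σ u ∈ q) (hσq : ∀ u ∈ q, σ u ∈ p)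
    (hCF : ∀ u ∈ p, ∀ v ∈ q, ⁅u, v⁆ = (0 : L))
    (hQK : ∀ u ∈ p, ∀ v ∈ p, ⁅u, v⁆ ∈ q)
    (Z₁ Z₂ : L) (hZ₁ : Z₁ ∈ p) (hZ₂ : Z₂ ∈ p)
    (a b : ℂ) (hab : ⁅Z₁, Z₂⁆ = a • σ Z₁ + b • σ Z₂) :
    ⁅Z₁, Z₂⁆ = 0 := by
  have h11 : ⁅σ Z₁, Z₁⁆ = 0 := by
    rw [← lie_skew, hCF Z₁ hZ₁ (σ Z₁) (hσp Z₁ hZ₁), neg_zero]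
  have h12 : ⁅σ Z₁, Z₂⁆ = 0 := by
    rw [← lie_skew, hCF Z₂ hZ₂ (σ Z₁) (hσp Z₁ hZ₁), neg_zero]
  have h21 : ⁅σ Z₂, Z₁⁆ = 0 := by
    rw [← lie_skew, hCF Z₁ hZ₁ (σ Z₂) (hσp Z₂ hZ₂), neg_zero]
  have h22 : ⁅σ Z₂, Z₂⁆ = 0 := by
    rw [← lie_skew, hCF Z₂ hZ₂ (σ Z₂) (hσp Z₂ hZ₂), neg_zero]
  have hb : b • σ ⁅Z₁, Z₂⁆ = 0 := by
    have := leibniz_lie (σ Z₁) Z₁ Z₂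
    rw [h11, h12, zero_lie, lie_zero, add_zero] at this
    calc b • σ ⁅Z₁, Z₂⁆ = ⁅σ Z₁, ⁅Z₁, Z₂⁆⁆ := by
          rw [hσbr, hab, lie_add, lie_smul, lie_smul, lie_self, smul_zero, zero_add]
      _ = 0 := this
  have ha : a • σ ⁅Z₁, Z₂⁆ = 0 := by
    have := leibniz_lie (σ Z₂) Z₁ Z₂
    rw [h21, h22, zero_lie, lie_zero, add_zero] at this
    calc a • σ ⁅Z₁, Z₂⁆ = -⁅σ Z₂, ⁅Z₁, Z₂⁆⁆ := by
          rw [hσbr, hab, lie_add, lie_smul, lie_smul, lie_self, smul_zero, add_zero,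
            ← lie_skew (σ Z₁) (σ Z₂), smul_neg]
      _ = 0 := by rw [this, neg_zero]
  by_cases hA : a = 0
  · by_cases hB : b = 0
    · rw [hab, hA, hB, zero_smul, zero_smul, add_zero]
    · have : σ ⁅Z₁, Z₂⁆ = 0 := by
        have := smul_eq_zero.mp hb; tauto
      calc ⁅Z₁, Z₂⁆ = σ (σ ⁅Z₁, Z₂⁆) := (hσσ _).symm
        _ = 0 := by rw [this, map_zero]
  · have : σ ⁅Z₁, Z₂⁆ = 0 := by
      have := smul_eq_zero.mp ha; tauto
    calc ⁅Z₁, Z₂⁆ = σ (σ ⁅Z₁, Z₂⁆) := (hσσ _).symm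
      _ = 0 := by rw [this, map_zero]
end
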